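/- Let M(x) = 1/(4(x₂ − x₃)(x₁ − x₃)(x₁ − x₂)) on the open set U ⊂ ℝ³ where (x₂ − x₃)(x₁ − x₃)(x₁ − x₂) ≠ 0, and let H = 2(x₁∂₁ + x₂∂₂ + x₃∂₃) and F = ∂₁ + ∂₂ + ∂₃. Then div(M·F) = 0 and div(M·H) = 0 at every point of U; that is, M is a common multiplier for the vector fields F and H. -/

import Mathlib

/-!
The denominator of `M` is invariant under translation along `(1, 1, 1)` and homogeneous of
degree `3`. Hence `div (M • F) = ∂_{(1,1,1)} M = 0`, while
`div (M • H) = 2 (⟨x, ∇M⟩ + 3 M) = 0` by Euler's identity `⟨x, ∇M⟩ = -3 M`.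
-/

/-- Partial derivative ∂ᵢf at x of a function on ℝⁿ (modeled as `Fin n → ℝ`). -/
noncomputable def pd {n : ℕ} (f : (Fin n → ℝ) → ℝ) (i : Fin n) (x : Fin n → ℝ) : ℝ :=
  fderiv ℝ f x (Pi.single i 1)

open Finset

section PartialDerivatives

variable {n : ℕ} {f : (Fin n → ℝ) → ℝ} {x : Fin n → ℝ}

theorem sum_mul_pd (v : Fin n → ℝ) : ∑ j, v j * pd f j x = fderiv ℝ f x v := by
  conv_rhs => rw [← univ_sum_single v]
  simp only [map_sum, pd]
  refine sum_congr rfl fun j _ => ?_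
  rw [← smul_eq_mul, ← map_smul, ← Pi.single_smul', smul_eq_mul, mul_one]

theorem pd_mul {g : (Fin n → ℝ) → ℝ} (hf : DifferentiableAt ℝ f x)
    (hg : DifferentiableAt ℝ g x) (j : Fin n) : pd (fun y => f y * g y) j x = pd f j x * g x + f x * pd g j x := by
  simp only [pd, fderiv_fun_mul hf hg, add_apply, smul_apply, smul_eq_mul]
  ring

theorem sum_pd_mul {Y : (Fin n → ℝ) → Fin n → ℝ} (hf : DifferentiableAt ℝ f x)
    (hY : DifferentiableAt ℝ Y x) :
    ∑ j, pd (fun y => f y * Y y j) j x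
      = fderiv ℝ f x (Y x) + f x * ∑ j, pd (fun y => Y y j) j x := by
  have hY_j (j : Fin n) : DifferentiableAt ℝ (fun y => Y y j) x := by fun_prop
  simp only [pd_mul hf (hY_j _), ← sum_mul_pd (Y x), mul_sum, ← sum_add_distrib, mul_comm]

theorem pd_const_mul_apply (c : ℝ) (j : Fin n) :
    pd (fun y : Fin n → ℝ => c * y j) j x = c := by
  have h : HasFDerivAt (fun y : Fin n → ℝ => c * y j) (c • ContinuousLinearMap.proj j) x :=
    (ContinuousLinearMap.proj (R := ℝ) (φ := fun _ : Fin n => ℝ) j).hasFDerivAt.const_mul c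
  simp [pd, h.fderiv]

theorem fderiv_apply_eq_zero_of_forall_add_smul {v : Fin n → ℝ}
    (h : ∀ t : ℝ, f (x + t • v) = f x) : fderiv ℝ f x v = 0 := by
  by_cases hf : DifferentiableAt ℝ f x
  · rw [← hf.lineDeriv_eq_fderiv, lineDeriv, funext h, deriv_const]
  · rw [fderiv_zero_of_not_differentiableAt hf, zero_apply]

theorem fderiv_apply_self_of_homogeneous {k : ℤ} (hf : DifferentiableAt ℝ f x)
    (h : ∀ t : ℝ, 0 < t → f (t • x) = t ^ k * f x) : fderiv ℝ f x x = k * f x := by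
  have hline : HasDerivAt (fun t : ℝ => t • x) x 1 := by
    simpa using (hasDerivAt_id (1 : ℝ)).smul_const x
  have hcomp : HasDerivAt (fun t : ℝ => f (t • x)) (fderiv ℝ f x x) 1 :=
    hf.hasFDerivAt.comp_hasDerivAt_of_eq 1 hline (one_smul ℝ x).symm
  have hpow : HasDerivAt (fun t : ℝ => t ^ k * f x) (k * f x) 1 := by
    simpa using (hasDerivAt_zpow k (1 : ℝ) (Or.inl one_ne_zero)).mul_const (f x)
  refine hcomp.unique (hpow.congr_of_eventuallyEq ?_)
  filter_upwards [lt_mem_nhds one_pos] with t ht using h t ht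

end PartialDerivatives

noncomputable def commonMultiplier (y : Fin 3 → ℝ) : ℝ :=
  1 / (4 * (y 1 - y 2) * (y 0 - y 2) * (y 0 - y 1))

theorem commonMultiplier_add_smul_one (y : Fin 3 → ℝ) (t : ℝ) :
    commonMultiplier (y + t • 1) = commonMultiplier y := by
  simp only [commonMultiplier, Pi.add_apply, Pi.smul_apply, Pi.one_apply]
  ring

theorem commonMultiplier_smul (y : Fin 3 → ℝ) (t : ℝ) :
    commonMultiplier (t • y) = t ^ (-3 : ℤ) * commonMultiplier y := by
  have hden : 4 * (t * y 1 - t * y 2) * (t * y 0 - t * y 2) * (t * y 0 - t * y 1)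
      = t ^ 3 * (4 * (y 1 - y 2) * (y 0 - y 2) * (y 0 - y 1)) := by ring
  simp only [commonMultiplier, Pi.smul_apply, smul_eq_mul, hden, one_div, mul_inv, zpow_neg,
    zpow_ofNat]

theorem differentiableAt_commonMultiplier {x : Fin 3 → ℝ}
    (hx : (x 1 - x 2) * (x 0 - x 2) * (x 0 - x 1) ≠ 0) :
    DifferentiableAt ℝ commonMultiplier x := by
  have hden : 4 * (x 1 - x 2) * (x 0 - x 2) * (x 0 - x 1) ≠ 0 := by
    simpa only [mul_assoc] using mul_ne_zero four_ne_zero hx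
  unfold commonMultiplier
  fun_prop (disch := exact hden)

/-- With M = 1/(4(x₂−x₃)(x₁−x₃)(x₁−x₂)), F = ∂₁+∂₂+∂₃ and H = 2Σxⱼ∂ⱼ, we have
div(M·F) = 0 and div(M·H) = 0 on the set where (x₂−x₃)(x₁−x₃)(x₁−x₂) ≠ 0. -/
theorem common_multiplier_F_H (x : Fin 3 → ℝ)
    (hx : (x 1 - x 2) * (x 0 - x 2) * (x 0 - x 1) ≠ 0) :
    (∑ j : Fin 3,
      pd (fun y => (1 / (4 * (y 1 - y 2) * (y 0 - y 2) * (y 0 - y 1))) * 1) j x = 0) ∧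
    (∑ j : Fin 3,
      pd (fun y => (1 / (4 * (y 1 - y 2) * (y 0 - y 2) * (y 0 - y 1))) * (2 * y j)) j x
        = 0) := by
  have hM := differentiableAt_commonMultiplier hx
  have htranslation : fderiv ℝ commonMultiplier x 1 = 0 :=
    fderiv_apply_eq_zero_of_forall_add_smul (commonMultiplier_add_smul_one x)
  have heuler : fderiv ℝ commonMultiplier x x = -3 * commonMultiplier x := by
    exact_mod_cast fderiv_apply_self_of_homogeneous hM fun t _ => commonMultiplier_smul x t
  constructor
  · change ∑ j, pd (fun y => commonMultiplier y * 1) j x = 0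
    simpa [htranslation] using sum_mul_pd (f := commonMultiplier) (x := x) 1
  · change ∑ j, pd (fun y => commonMultiplier y * (2 * y j)) j x = 0
    rw [sum_pd_mul (Y := fun y j => 2 * y j) hM (by fun_prop)]
    simp only [pd_const_mul_apply, sum_const, card_univ, Fintype.card_fin]
    rw [show (fun j => 2 * x j) = (2 : ℝ) • x from rfl, map_smul, heuler]
    ring
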